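/- (Genus-one Fay identity) For all z, w, x, y ∈ ℂ at which all occurring Kronecker functions are defined (i.e. the relevant theta function values are nonzero), φ(z,x)φ(w,y) = φ(z−w,x)φ(w,x+y) + φ(w−z,y)φ(z,x+y). -/

import Mathlib

open Complex

/-- The odd theta function
`θ(u) = −∑_{k∈ℤ} exp(πiτ(k+1/2)² + 2πi(k+1/2)(u+1/2))`. -/
noncomputable def jtheta (τ u : ℂ) : ℂ :=
  -∑' k : ℤ, Complex.exp (Real.pi * Complex.I * τ * ((k : ℂ) + 1/2)^2 +
      2 * Real.pi * Complex.I * ((k : ℂ) + 1/2) * (u + 1/2))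


/-- The Kronecker elliptic function `φ(u,x) = θ'(0)θ(u+x)/(θ(u)θ(x))`. -/
noncomputable def kron (τ u x : ℂ) : ℂ :=
  deriv (jtheta τ) 0 * jtheta τ (u + x) / (jtheta τ u * jtheta τ x)

/-!
Clearing denominators turns Fay's identity into Weierstrass' three-term identity
`θ(Z+A)θ(Z-A)θ(B+C)θ(B-C) + θ(Z+B)θ(Z-B)θ(C+A)θ(C-A) + θ(Z+C)θ(Z-C)θ(A+B)θ(A-B) = 0`
at `(Z, A, B, C) = ((z+w+x+y)/2, (z-w+x-y)/2, (x+y+z-w)/2, (x+y-z+w)/2)`.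

To prove the latter, expand each product of four theta series over `ℤ⁴`. The substitution
`n = (k₁+k₂+1, k₁-k₂, k₃+k₄+1, k₃-k₄)` turns the first product into the sum of the single
Gaussian term `exp(πiτ|n|²/2 + 2πi⟨n, (Z,A,B,C)⟩)`, weighted by `(-1)^(n₀+n₂)`, over those `n`
with `n₀+n₁` and `n₂+n₃` odd; the other two products are the same sum for the other two ways
of splitting the coordinates of `n` into pairs. A given `n` splits into two odd pairs in either
none or exactly two ways, with opposite weights, so the three sums cancel termwise.
-/

open Real

lemma HasSum.mul_of_rclike {𝕜 ι ι' : Type*} [RCLike 𝕜] {f : ι → 𝕜} {g : ι' → 𝕜} {a b : 𝕜}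
    (hf : HasSum f a) (hg : HasSum g b) :
    HasSum (fun p : ι × ι' => f p.1 * g p.2) (a * b) :=
  hf.mul hg (summable_mul_of_summable_norm hf.summable.norm hg.summable.norm)

lemma Complex.exp_pi_mul_I_mul_int (m : ℤ) : cexp (π * I * m) = (-1) ^ m := by
  rw [mul_comm, Complex.exp_int_mul, Complex.exp_pi_mul_I]

lemma neg_one_zpow_add_neg_one_zpow_of_odd {R : Type*} [DivisionRing R] {m n : ℤ}
    (h : Odd (m - n)) : (-1 : R) ^ m + (-1) ^ n = 0 := by
  rw [show m = m - n + n by ring, zpow_add₀ (neg_ne_zero.2 one_ne_zero), h.neg_one_zpow,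
    neg_one_mul, neg_add_cancel]

noncomputable def jthetaTerm (τ u : ℂ) (k : ℤ) : ℂ :=
  cexp (π * I * τ * ((k : ℂ) + 1/2) ^ 2 + 2 * π * I * ((k : ℂ) + 1/2) * (u + 1/2))

lemma jthetaTerm_eq_mul_jacobiTheta₂_term (τ u : ℂ) (k : ℤ) :
    jthetaTerm τ u k =
      cexp (π * I * τ / 4 + π * I * (u + 1/2)) * jacobiTheta₂_term k (u + 1/2 + τ/2) τ := by
  rw [jthetaTerm, jacobiTheta₂_term, ← Complex.exp_add]
  congr 1
  ring

lemma hasSum_jthetaTerm {τ : ℂ} (hτ : 0 < τ.im) (u : ℂ) :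
    HasSum (jthetaTerm τ u) (-jtheta τ u) := by
  have hs : Summable (jthetaTerm τ u) :=
    (((summable_jacobiTheta₂_term_iff _ τ).2 hτ).mul_left _).congr
      fun k => (jthetaTerm_eq_mul_jacobiTheta₂_term τ u k).symm
  rw [jtheta, neg_neg]
  exact hs.hasSum

lemma jtheta_neg (τ u : ℂ) : jtheta τ (-u) = -jtheta τ u := by
  have h : ∀ k : ℤ, jthetaTerm τ (-u) (-1 - k) = -jthetaTerm τ u k := by
    intro k
    have hsign : -jthetaTerm τ u k = cexp (π * I * (-2 * k - 1 : ℤ)) * jthetaTerm τ u k := by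
      rw [Complex.exp_pi_mul_I_mul_int, Odd.neg_one_zpow ⟨-k - 1, by ring⟩, neg_one_mul]
    rw [hsign, jthetaTerm, jthetaTerm, ← Complex.exp_add]
    congr 1
    push_cast
    ring
  change -∑' k, jthetaTerm τ (-u) k = -(-∑' k, jthetaTerm τ u k)
  rw [← (Equiv.subLeft (-1 : ℤ)).tsum_eq]
  simp only [Equiv.subLeft_apply, h, tsum_neg]

noncomputable def latticeTerm (τ Z A B C : ℂ) : ℤ × ℤ × ℤ × ℤ → ℂ
  | (a, b, c, d) => cexp (π * I * τ * (a ^ 2 + b ^ 2 + c ^ 2 + d ^ 2) / 2 +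
      2 * π * I * (a * Z + b * A + c * B + d * C))

noncomputable def oddPairSign : ℤ × ℤ × ℤ × ℤ → ℂ
  | (a, b, c, d) => if Odd (a + b) ∧ Odd (c + d) then (-1) ^ (a + c) else 0

def pairSumDiff : ℤ × ℤ × ℤ × ℤ → ℤ × ℤ × ℤ × ℤ
  | (a, b, c, d) => (a + b + 1, a - b, c + d + 1, c - d)

def cycleTail : ℤ × ℤ × ℤ × ℤ ≃ ℤ × ℤ × ℤ × ℤ where
  toFun | (a, b, c, d) => (a, c, d, b)
  invFun | (a, b, c, d) => (a, d, b, c)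
  left_inv _ := rfl
  right_inv _ := rfl

lemma latticeTerm_cycleTail (τ Z A B C : ℂ) (n : ℤ × ℤ × ℤ × ℤ) :
    latticeTerm τ Z B C A (cycleTail n) = latticeTerm τ Z A B C n := by
  obtain ⟨a, b, c, d⟩ := n
  simp only [latticeTerm, cycleTail, Equiv.coe_fn_mk]
  ring_nf

lemma oddPairSign_add_cycleTail (n : ℤ × ℤ × ℤ × ℤ) :
    oddPairSign n + oddPairSign (cycleTail n) + oddPairSign (cycleTail (cycleTail n)) = 0 := by
  obtain ⟨a, b, c, d⟩ := n
  simp only [oddPairSign, cycleTail, Equiv.coe_fn_mk, Int.odd_iff]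
  split_ifs <;> (try simp only [add_zero, zero_add]) <;>
    first | omega | exact neg_one_zpow_add_neg_one_zpow_of_odd (Int.odd_iff.2 (by omega))

lemma pairSumDiff_injective : Function.Injective pairSumDiff := by
  rintro ⟨a, b, c, d⟩ ⟨a', b', c', d'⟩ h
  simp only [pairSumDiff, Prod.mk.injEq] at h ⊢
  omega

lemma oddPairSign_eq_zero_of_notMem_range {n : ℤ × ℤ × ℤ × ℤ}
    (hn : n ∉ Set.range pairSumDiff) : oddPairSign n = 0 := by
  obtain ⟨a, b, c, d⟩ := n
  rw [oddPairSign, if_neg]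
  rintro ⟨⟨p, hp⟩, ⟨q, hq⟩⟩
  exact hn ⟨(p, p - b, q, q - d), by simp only [pairSumDiff, Prod.mk.injEq]; omega⟩

lemma jthetaTerm_mul_eq (τ Z A B C : ℂ) (k : ℤ × ℤ × ℤ × ℤ) :
    jthetaTerm τ (Z + A) k.1 * (jthetaTerm τ (Z - A) k.2.1 *
      (jthetaTerm τ (B + C) k.2.2.1 * jthetaTerm τ (B - C) k.2.2.2)) =
      oddPairSign (pairSumDiff k) * latticeTerm τ Z A B C (pairSumDiff k) := by
  obtain ⟨a, b, c, d⟩ := k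
  simp only [pairSumDiff]
  rw [oddPairSign, if_pos ⟨⟨a, by ring⟩, ⟨c, by ring⟩⟩, ← Complex.exp_pi_mul_I_mul_int,
    latticeTerm]
  simp only [jthetaTerm, ← Complex.exp_add]
  congr 1
  push_cast
  ring

lemma hasSum_oddPairSign_mul_latticeTerm {τ : ℂ} (hτ : 0 < τ.im) (Z A B C : ℂ) :
    HasSum (fun n => oddPairSign n * latticeTerm τ Z A B C n)
      (jtheta τ (Z + A) * jtheta τ (Z - A) * (jtheta τ (B + C) * jtheta τ (B - C))) := by
  have h := (hasSum_jthetaTerm hτ (Z + A)).mul_of_rclike <|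
    (hasSum_jthetaTerm hτ (Z - A)).mul_of_rclike <|
      (hasSum_jthetaTerm hτ (B + C)).mul_of_rclike (hasSum_jthetaTerm hτ (B - C))
  refine (pairSumDiff_injective.hasSum_iff fun n hn => ?_).1 ?_
  · rw [oddPairSign_eq_zero_of_notMem_range hn, zero_mul]
  rw [show jtheta τ (Z + A) * jtheta τ (Z - A) * (jtheta τ (B + C) * jtheta τ (B - C)) =
    -jtheta τ (Z + A) * (-jtheta τ (Z - A) * (-jtheta τ (B + C) * -jtheta τ (B - C))) by ring]
  exact h.congr_fun fun k => (jthetaTerm_mul_eq τ Z A B C k).symm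

theorem jtheta_weierstrass {τ : ℂ} (hτ : 0 < τ.im) (Z A B C : ℂ) :
    jtheta τ (Z + A) * jtheta τ (Z - A) * (jtheta τ (B + C) * jtheta τ (B - C)) +
      jtheta τ (Z + B) * jtheta τ (Z - B) * (jtheta τ (C + A) * jtheta τ (C - A)) +
      jtheta τ (Z + C) * jtheta τ (Z - C) * (jtheta τ (A + B) * jtheta τ (A - B)) = 0 := by
  have h₁ := hasSum_oddPairSign_mul_latticeTerm hτ Z A B C
  have h₂ := cycleTail.hasSum_iff.2 (hasSum_oddPairSign_mul_latticeTerm hτ Z B C A)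
  have h₃ := (cycleTail.trans cycleTail).hasSum_iff.2
    (hasSum_oddPairSign_mul_latticeTerm hτ Z C A B)
  refine ((h₁.add h₂).add h₃).unique ?_
  convert hasSum_zero with n
  simp only [Function.comp_apply, Equiv.trans_apply, latticeTerm_cycleTail, ← add_mul,
    oddPairSign_add_cycleTail, zero_mul]

theorem fay_identity_general (τ : ℂ) (hτ : 0 < τ.im) (z w x y : ℂ)
    (hz : jtheta τ z ≠ 0) (hw : jtheta τ w ≠ 0)
    (hx : jtheta τ x ≠ 0) (hy : jtheta τ y ≠ 0)
    (hzw : jtheta τ (z - w) ≠ 0)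
    (hxy : jtheta τ (x + y) ≠ 0) :
    kron τ z x * kron τ w y =
      kron τ (z - w) x * kron τ w (x + y) + kron τ (w - z) y * kron τ z (x + y) := by
  have key : jtheta τ (z + x) * jtheta τ (w + y) * (jtheta τ (x + y) * jtheta τ (z - w)) +
      jtheta τ (z + (x + y)) * jtheta τ w * (jtheta τ x * jtheta τ (w - z + y)) +
      jtheta τ (w + (x + y)) * jtheta τ z * (jtheta τ (z - w + x) * jtheta τ (-y)) = 0 := by
    convert jtheta_weierstrass hτ ((z + w + x + y) / 2) ((z - w + x - y) / 2)
      ((x + y + z - w) / 2) ((x + y - z + w) / 2) using 4 <;> ring_nf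
  have hodd : jtheta τ (w - z) = -jtheta τ (z - w) := by
    rw [← jtheta_neg, neg_sub]
  rw [jtheta_neg] at key
  simp only [kron, hodd]
  field_simp
  linear_combination deriv (jtheta τ) 0 ^ 2 * key

/-- The genus-one Fay identity for the Kronecker function. -/
theorem fay_identity (τ : ℂ) (hτ : 0 < τ.im) (z w x y : ℂ)
    (hz : jtheta τ z ≠ 0) (hw : jtheta τ w ≠ 0)
    (hx : jtheta τ x ≠ 0) (hy : jtheta τ y ≠ 0)
    (hzw : jtheta τ (z - w) ≠ 0) (hwz : jtheta τ (w - z) ≠ 0)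
    (hxy : jtheta τ (x + y) ≠ 0) :
    kron τ z x * kron τ w y =
      kron τ (z - w) x * kron τ w (x + y) + kron τ (w - z) y * kron τ z (x + y) :=
  fay_identity_general τ hτ z w x y hz hw hx hy hzw hxy
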